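/- Cyclic invariance of m_{ijk} mod δ: with notation as before (w_i, w_j, w_k words, μ_{pq} = ε_p(w_q), δ = gcd of the three pairwise quantities μ_{ij}, μ_{jk}, μ_{ik}, and assuming μ_{pq} = μ_{qp}), replacing w_k by any cyclic permutation v u of a factorization w_k = u v changes ε_{ij}(w_k) by a multiple of δ; hence m_{ijk} = ε_{ij}(w_k) + ε_{jk}(w_i) + ε_{ki}(w_j) is well defined in ℤ/δℤ independent of the choice of starting point (basepoint) of each word. -/

import Mathlib

/-- A word in signed letters `m_p^{±1}`: a list of (letter index, sign),
with sign `true` meaning `+1` and `false` meaning `-1`. -/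
abbrev SWord (ℓ : ℕ) := List (Fin ℓ × Bool)

/-- The sign value of a boolean sign. -/
def sgn (b : Bool) : ℤ := if b then 1 else -1

/-- `eps i w` is the exponent sum of the letter `m_i` in the word `w`. -/
def eps {ℓ : ℕ} (i : Fin ℓ) : SWord ℓ → ℤ
  | [] => 0
  | x :: t => (if x.1 = i then sgn x.2 else 0) + eps i t

/-- `epsPair i j w` is the signed count of ordered pairs of positions `p < q`
in `w` carrying `m_i^r` and `m_j^s` respectively, each contributing `r * s`. -/
def epsPair {ℓ : ℕ} (i j : Fin ℓ) : SWord ℓ → ℤ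
  | [] => 0
  | x :: t => (if x.1 = i then sgn x.2 * eps j t else 0) + epsPair i j t

/-- Formal inverse of a word: reverse the list and negate each sign. -/
def winv {ℓ : ℕ} (w : SWord ℓ) : SWord ℓ :=
  w.reverse.map (fun x => (x.1, !x.2))

/-- The word `m_i^p` for an integer `p`: `|p|` copies of `m_i^{sign p}`. -/
def zpowWord {ℓ : ℕ} (i : Fin ℓ) (p : ℤ) : SWord ℓ :=
  List.replicate p.natAbs (i, decide (0 ≤ p))

/-- The element of the free group represented by a word of signed letters. -/
def toFree {ℓ : ℕ} (w : SWord ℓ) : FreeGroup (Fin ℓ) :=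
  (w.map (fun x => if x.2 then FreeGroup.of x.1 else (FreeGroup.of x.1)⁻¹)).prod

lemma eps_append {ℓ : ℕ} (i : Fin ℓ) (a b : SWord ℓ) :
    eps i (a ++ b) = eps i a + eps i b := by
  induction a with
  | nil => simp [eps]
  | cons x t ih => rw [List.cons_append, eps, eps, ih, add_assoc]

lemma epsPair_append {ℓ : ℕ} (i j : Fin ℓ) (a b : SWord ℓ) :
    epsPair i j (a ++ b) = epsPair i j a + epsPair i j b + eps i a * eps j b := by
  induction a with
  | nil => simp [epsPair, eps]
  | cons x t ih =>
    simp only [List.cons_append, epsPair, eps, ih, eps_append]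
    split_ifs <;> ring

lemma epsPair_append_sub_epsPair_append_swap {ℓ : ℕ} (i j : Fin ℓ) (u v : SWord ℓ) :
    epsPair i j (u ++ v) - epsPair i j (v ++ u) = eps i u * eps j v - eps i v * eps j u := by
  rw [epsPair_append, epsPair_append]
  ring

lemma dvd_epsPair_append_sub_epsPair_append_swap {ℓ : ℕ} {i j : Fin ℓ} {u v : SWord ℓ} {d : ℤ}
    (hi : d ∣ eps i (u ++ v)) (hj : d ∣ eps j (u ++ v)) :
    d ∣ epsPair i j (u ++ v) - epsPair i j (v ++ u) := by
  have hchange : epsPair i j (u ++ v) - epsPair i j (v ++ u) =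
      eps i (u ++ v) * eps j v - eps i v * eps j (u ++ v) := by
    rw [epsPair_append_sub_epsPair_append_swap, eps_append, eps_append]
    ring
  rw [hchange]
  exact dvd_sub (hi.mul_right _) (hj.mul_left _)

theorem epsPair_basepoint_change_general {ℓ : ℕ} (i j : Fin ℓ)
    (wj : SWord ℓ) (u v : SWord ℓ) :
    ((Int.gcd (Int.gcd (eps i wj) (eps j (u ++ v))) (eps i (u ++ v)) : ℤ)) ∣
      (epsPair i j (u ++ v) - epsPair i j (v ++ u)) :=
  dvd_epsPair_append_sub_epsPair_append_swap (Int.gcd_dvd_right _ _)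
    ((Int.gcd_dvd_left _ _).trans (Int.gcd_dvd_right _ _))

/-- Cyclic invariance of m_{ijk} mod δ: replacing w_k = u v by the cyclic
permutation v u changes ε_{ij}(w_k) by a multiple of δ, so m_{ijk} is well
defined in ℤ/δℤ independent of the choice of basepoint. -/
theorem epsPair_basepoint_change {ℓ : ℕ} (i j k : Fin ℓ)
    (hij : i ≠ j) (hjk : j ≠ k) (hik : i ≠ k)
    (wi wj : SWord ℓ) (u v : SWord ℓ)
    (hsym_ij : eps i wj = eps j wi)
    (hsym_jk : eps j (u ++ v) = eps k wj)
    (hsym_ik : eps i (u ++ v) = eps k wi) :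
    ((Int.gcd (Int.gcd (eps i wj) (eps j (u ++ v))) (eps i (u ++ v)) : ℤ)) ∣
      (epsPair i j (u ++ v) - epsPair i j (v ++ u)) :=
  epsPair_basepoint_change_general i j wj u v
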